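/- arXiv:0902.2119 — 7 statements merged into one kernel-verified Lean document; each statement's English description precedes it below -/
import Mathlib

section
/- Define RF(G) = G / K where K is the intersection of kernels of all homomorphisms G → F (F a fixed nonabelian free group), and RF_na(G) = G / K_na where K_na is the intersection of kernels of all homomorphisms G → F with nonabelian image. Then the kernel of the natural surjection RF(G) → RF_na(G) equals the center of RF(G). -/
/-!
An element `z` of a free group commuting with a generator `a` has reduced word starting
with `a±1`: otherwise `a z` has reduced word `a w`, which would then be a sublist of `w a` of
the same length, hence equal to it, so `w` would start with `a` after all.
Hence nonabelian free groups, and by Nielsen–Schreier nonabelian subgroups of free groups,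
have trivial center. So if `g` is central modulo `K`, then for every `f : G → F₂` the element
`f g` is central in `f(G)`, which forces `f g = 1` whenever `f(G)` is nonabelian, i.e. `g ∈ Kna`;
conversely an element of `Kna` is killed or sent into an abelian image by every `f`.
-/

namespace FreeGroup

variable {α : Type*}

theorem toWord_of_mul_of_fst_head_ne [DecidableEq α] {z : FreeGroup α} {a : α}
    {p : α × Bool} {t : List (α × Bool)} (hz : z.toWord = p :: t) (hp : p.1 ≠ a) :
    (of a * z).toWord = (a, true) :: z.toWord := by
  have hred : IsReduced ((a, true) :: z.toWord) := by
    rw [hz, isReduced_cons_cons]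
    exact ⟨fun h => absurd h.symm hp, hz ▸ isReduced_toWord⟩
  rw [toWord_mul, toWord_of, List.singleton_append, hred.reduce_eq]

theorem fst_head_eq_of_commute_of [DecidableEq α] {z : FreeGroup α} {a : α}
    (h : Commute z (of a)) {p : α × Bool} {t : List (α × Bool)} (hz : z.toWord = p :: t) :
    p.1 = a := by
  by_contra hp
  have hsub : List.Sublist ((a, true) :: z.toWord) (z.toWord ++ [(a, true)]) := by
    rw [← toWord_of_mul_of_fst_head_ne hz hp, ← h.eq, ← toWord_of]
    exact toWord_mul_sublist z (of a)
  have heq := hsub.eq_of_length (by simp)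
  rw [hz, List.cons_append, List.cons.injEq] at heq
  exact hp (congrArg Prod.fst heq.1).symm

theorem eq_one_of_commute_of_of_ne {z : FreeGroup α} {a b : α} (hab : a ≠ b)
    (ha : Commute z (of a)) (hb : Commute z (of b)) : z = 1 := by
  classical
  rw [← toWord_eq_nil_iff]
  match hz : z.toWord with
  | [] => rfl
  | p :: t => exact absurd ((fst_head_eq_of_commute_of ha hz).symm.trans
      (fst_head_eq_of_commute_of hb hz)) hab

theorem mem_center_iff_forall_commute_of {z : FreeGroup α} :
    z ∈ Subgroup.center (FreeGroup α) ↔ ∀ a, Commute z (of a) := by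
  rw [Subgroup.center_eq_iInf (closure_range_of α)]
  simp [Subgroup.mem_centralizer_singleton_iff, Commute, SemiconjBy]

theorem center_eq_top_of_subsingleton [Subsingleton α] :
    Subgroup.center (FreeGroup α) = ⊤ := by
  rw [eq_top_iff, ← closure_range_of α, Subgroup.closure_le]
  rintro _ ⟨b, rfl⟩
  exact mem_center_iff_forall_commute_of.2 fun a => Subsingleton.elim a b ▸ Commute.refl _

theorem center_eq_bot [Nontrivial α] : Subgroup.center (FreeGroup α) = ⊥ := by
  obtain ⟨a, b, hab⟩ := exists_pair_ne α
  refine (Subgroup.eq_bot_iff_forall _).2 fun z hz => ?_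
  rw [mem_center_iff_forall_commute_of] at hz
  exact eq_one_of_commute_of_of_ne hab (hz a) (hz b)

end FreeGroup

theorem IsFreeGroup.center_eq_bot {F : Type*} [Group F] [IsFreeGroup F] {b c : F}
    (hbc : ¬Commute b c) : Subgroup.center F = ⊥ := by
  let e := IsFreeGroup.toFreeGroup F
  rcases subsingleton_or_nontrivial (IsFreeGroup.Generators F)
  · have hb : e b ∈ Subgroup.center _ :=
      (FreeGroup.center_eq_top_of_subsingleton (α := IsFreeGroup.Generators F)) ▸ trivial
    have hb' := (MulEquivClass.apply_mem_center_iff e).1 hb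
    exact absurd (Subgroup.mem_center_iff.1 hb' c).symm hbc
  · refine (Subgroup.eq_bot_iff_forall _).2 fun z hz => e.injective ?_
    rw [map_one, ← Subgroup.mem_bot, ← FreeGroup.center_eq_bot]
    exact MulEquivClass.apply_mem_center e hz

theorem IsFreeGroup.eq_one_of_forall_commute {F : Type*} [Group F] [IsFreeGroup F]
    (H : Subgroup F) {z : F} (hz : z ∈ H) (hcomm : ∀ x ∈ H, Commute z x)
    (hH : ¬∀ x ∈ H, ∀ y ∈ H, x * y = y * x) : z = 1 := by
  push Not at hH
  obtain ⟨b, hb, c, hc, hbc⟩ := hH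
  have hcenter : (⟨z, hz⟩ : H) ∈ Subgroup.center H := Subgroup.mem_center_iff.2 fun x =>
    Subtype.ext (hcomm x x.2).symm
  rw [IsFreeGroup.center_eq_bot (b := (⟨b, hb⟩ : H)) (c := ⟨c, hc⟩)
    fun h => hbc (congrArg Subtype.val h), Subgroup.mem_bot] at hcenter
  exact congrArg Subtype.val hcenter

theorem QuotientGroup.mk_eq_mk_iff_of_eq_iInf_ker {G H ι : Type*} [Group G] [Group H]
    {f : ι → G →* H} {K : Subgroup G} [K.Normal] (hK : K = ⨅ i, (f i).ker) {x y : G} :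
    (x : G ⧸ K) = y ↔ ∀ i, f i x = f i y := by
  simp only [QuotientGroup.eq, hK, Subgroup.mem_iInf, MonoidHom.mem_ker, map_mul, map_inv,
    inv_mul_eq_one]

theorem QuotientGroup.mk_mem_center_iff_of_eq_iInf_ker {G H ι : Type*} [Group G] [Group H]
    {f : ι → G →* H} {K : Subgroup G} [K.Normal] (hK : K = ⨅ i, (f i).ker) {g : G} :
    (g : G ⧸ K) ∈ Subgroup.center (G ⧸ K) ↔ ∀ i h, Commute (f i g) (f i h) := by
  rw [Subgroup.mem_center_iff, QuotientGroup.mk_surjective.forall]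
  simp only [← QuotientGroup.mk_mul, mk_eq_mk_iff_of_eq_iInf_ker hK, map_mul]
  exact ⟨fun h i x => (h x i).symm, fun h x i => (h i x).symm⟩

/-- The kernel of the natural surjection `RF(G) → RF_na(G)` is the center
of `RF(G)`. Here `RF(G) = G ⧸ K` where `K` is the intersection of the kernels
of all homomorphisms to a rank-two free group, and `RF_na(G) = G ⧸ Kna` where
`Kna` is the intersection of the kernels of those homomorphisms having
nonabelian image. -/
theorem stmt_4 {G : Type*} [Group G] (K Kna : Subgroup G)
    [K.Normal] [Kna.Normal]
    (hK : K = ⨅ f : G →* FreeGroup (Fin 2), f.ker)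
    (hKna : Kna = ⨅ f : {f : G →* FreeGroup (Fin 2) //
        ¬ ∀ x ∈ f.range, ∀ y ∈ f.range, x * y = y * x}, (f : G →* FreeGroup (Fin 2)).ker)
    (hle : K ≤ Kna.comap (MonoidHom.id G)) :
    (QuotientGroup.map K Kna (MonoidHom.id G) hle).ker
      = Subgroup.center (G ⧸ K) := by
  ext x
  induction x using QuotientGroup.induction_on with | H g => ?_
  rw [MonoidHom.mem_ker, QuotientGroup.map_mk, MonoidHom.id_apply, QuotientGroup.eq_one_iff,
    QuotientGroup.mk_mem_center_iff_of_eq_iInf_ker (f := id) hK, hKna]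
  simp only [Subgroup.mem_iInf, MonoidHom.mem_ker, Subtype.forall, id]
  constructor
  · intro hg f h
    by_cases hf : ∀ x ∈ f.range, ∀ y ∈ f.range, x * y = y * x
    · exact hf _ ⟨g, rfl⟩ _ ⟨h, rfl⟩
    · rw [hg f hf]
      exact Commute.one_left _
  · intro hg f hf
    exact IsFreeGroup.eq_one_of_forall_commute f.range ⟨g, rfl⟩
      (by rintro _ ⟨h, rfl⟩; exact hg f h) hf
end

section
/- If H is a finitely generated residually free group, then the center Z(H) is finitely generated; in fact the abelianization map H → H_ab is injective on Z(H). -/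
/-!
If `x` is central in `H` and `f : H → F` is a homomorphism to a free group with `f x ≠ 1`, then
`f x` is a nontrivial central element of the free group `f H` (Nielsen–Schreier). In a free group
a nontrivial element commuting with every generator forces the basis to have at most one element,
so `f H` is abelian and `f` kills `[H, H]`. Hence no nontrivial central element lies in `[H, H]`,
i.e. the center embeds into `H_ab`, which is a finitely generated abelian group, so all of its
subgroups are finitely generated.
-/

open Subgroup

namespace FreeGroup

variable {α : Type*}

theorem toWord_of_mul_of_ne [DecidableEq α] {c : FreeGroup α} {x : α} {s : Bool}
    {w : List (α × Bool)} (hc : c.toWord = (x, s) :: w) {a : α} (hax : a ≠ x) :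
    (of a * c).toWord = (a, true) :: c.toWord := by
  rw [toWord_mul, toWord_of, List.singleton_append, reduce.cons, reduce_toWord, hc]
  simp [hax]

theorem eq_of_commute_of [DecidableEq α] {c : FreeGroup α} {x : α} {s : Bool}
    {w : List (α × Bool)} (hc : c.toWord = (x, s) :: w) {a : α} (h : Commute c (of a)) :
    a = x := by
  by_contra hax
  -- `a * c` has the reduced word `(a, true) :: c.toWord`; that of `c * a` is a sublist of
  -- `c.toWord ++ [(a, true)]` of the same length, so the two lists agree
  have hsub := toWord_mul_sublist c (of a)
  rw [h.eq, toWord_of_mul_of_ne hc hax, toWord_of] at hsub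
  have heq := hsub.eq_of_length (by simp)
  rw [hc] at heq
  simp_all

theorem subsingleton_of_mem_center {c : FreeGroup α} (hc : c ∈ center (FreeGroup α))
    (hc1 : c ≠ 1) : Subsingleton α := by
  classical
  obtain ⟨⟨x, s⟩, w, hw⟩ := List.exists_cons_of_ne_nil (mt toWord_eq_nil_iff.mp hc1)
  have hx (a : α) : a = x := eq_of_commute_of hw (mem_center_iff.mp hc (of a)).symm
  exact ⟨fun a b => (hx a).trans (hx b).symm⟩

instance isMulCommutative_of_subsingleton [Subsingleton α] : IsMulCommutative (FreeGroup α) := by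
  cases isEmpty_or_nonempty α
  · infer_instance
  · have : Unique α := ⟨⟨Classical.arbitrary α⟩, fun _ => Subsingleton.elim _ _⟩
    infer_instance

end FreeGroup

theorem IsFreeGroup.isMulCommutative_of_mem_center {G : Type*} [Group G] [IsFreeGroup G] {c : G}
    (hc : c ∈ center G) (hc1 : c ≠ 1) : IsMulCommutative G := by
  let e := IsFreeGroup.toFreeGroup G
  have : Subsingleton (IsFreeGroup.Generators G) :=
    FreeGroup.subsingleton_of_mem_center (MulEquivClass.apply_mem_center e hc) (by simpa using hc1)
  exact isMulCommutative_iff.mpr fun a b => e.injective (by simp [mul_comm' (e a)])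

instance Abelianization.fg {G : Type*} [Group G] [Group.FG G] : Group.FG (Abelianization G) :=
  inferInstanceAs (Group.FG (G ⧸ commutator G))

theorem Subgroup.fg_of_commGroup {A : Type*} [CommGroup A] [Group.FG A] (K : Subgroup A) :
    K.FG := by
  have : IsNoetherian ℤ (Additive A) := isNoetherian_of_isNoetherianRing_of_finite ℤ _
  have := IsNoetherian.noetherian (AddSubgroup.toIntSubmodule K.toAddSubgroup)
  exact (fg_iff_add_fg K).mpr ((Submodule.fg_iff_addSubgroup_fg _).mp this)

theorem Group.fg_of_injective_commGroup {G A : Type*} [Group G] [CommGroup A] [Group.FG A]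
    {f : G →* A} (hf : Function.Injective f) : Group.FG G :=
  have : Group.FG f.range := (Group.fg_iff_subgroup_fg _).mpr f.range.fg_of_commGroup
  Group.fg_of_surjective (f := (MonoidHom.ofInjective hf).symm.toMonoidHom)
    (MonoidHom.ofInjective hf).symm.surjective

theorem MonoidHom.commutator_le_ker {G M : Type*} [Group G] [Group M] (f : G →* M)
    [IsMulCommutative f.range] : commutator G ≤ f.ker := by
  open scoped IsMulCommutative in
  simpa [ker_rangeRestrict] using Abelianization.commutator_subset_ker f.rangeRestrict

theorem MonoidHom.apply_mem_center_of_surjective {G M : Type*} [Group G] [Group M] (f : G →* M)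
    (hf : Function.Surjective f) {x : G} (hx : x ∈ center G) : f x ∈ center M := by
  refine mem_center_iff.mpr fun m => ?_
  obtain ⟨g, rfl⟩ := hf m
  rw [← map_mul, mem_center_iff.mp hx g, map_mul]

theorem MonoidHom.isMulCommutative_range_of_mem_center {G F : Type*} [Group G] [Group F]
    [IsFreeGroup F] (f : G →* F) {x : G} (hx : x ∈ center G) (hfx : f x ≠ 1) :
    IsMulCommutative f.range :=
  IsFreeGroup.isMulCommutative_of_mem_center (c := f.rangeRestrict x)
    (f.rangeRestrict.apply_mem_center_of_surjective f.rangeRestrict_surjective hx)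
    (by simpa [Subtype.ext_iff] using hfx)

def IsResiduallyFree (H : Type*) [Group H] : Prop :=
  ∀ g : H, g ≠ 1 → ∃ (α : Type) (f : H →* FreeGroup α), f g ≠ 1

theorem IsResiduallyFree.eq_one_of_mem_center_of_mem_commutator {H : Type*} [Group H]
    (hH : IsResiduallyFree H) {x : H} (hx : x ∈ center H) (hxc : x ∈ commutator H) : x = 1 := by
  by_contra hx1
  obtain ⟨α, f, hfx⟩ := hH x hx1
  have := f.isMulCommutative_range_of_mem_center hx hfx
  exact hfx (f.commutator_le_ker hxc)

/-- If `H` is a finitely generated residually free group, then its center is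
finitely generated; in fact the abelianization map is injective on the
center. -/
theorem stmt_6 {H : Type*} [Group H] [Group.FG H]
    (hres : ∀ g : H, g ≠ 1 → ∃ (α : Type) (f : H →* FreeGroup α), f g ≠ 1) :
    (Subgroup.center H).FG ∧
      ∀ x ∈ Subgroup.center H, Abelianization.of x = 1 → x = 1 := by
  have hker (x) (hx : x ∈ center H) (hab : Abelianization.of x = 1) : x = 1 :=
    IsResiduallyFree.eq_one_of_mem_center_of_mem_commutator hres hx
      ((QuotientGroup.eq_one_iff x).mp hab)
  let φ := Abelianization.of.comp (center H).subtype
  have hφ : Function.Injective φ :=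
    (injective_iff_map_eq_one φ).mpr fun z hz => Subtype.ext (hker z z.2 hz)
  exact ⟨(Group.fg_iff_subgroup_fg _).mp (Group.fg_of_injective_commGroup hφ), hker⟩
end

section
/- Let G ≤ A₁ × A₂ and let f : G → F be a homomorphism to a free group F with nonabelian image. Then f factors through one of the coordinate projections: either G ∩ ker(p₁) ≤ ker f or G ∩ ker(p₂) ≤ ker f. -/
/-!
In a free group the centralizer of an element `a ≠ 1` is free (Nielsen–Schreier) with nontrivial
center, hence infinite cyclic. This gives commutative transitivity, and it shows that `u` commutes
with `a` as soon as `a` commutes with `u a u⁻¹`: then `u` normalizes the centralizer `⟨g⟩` of `a`,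
so `u g u⁻¹ = g^{±1}` and `u²`, hence `u`, commutes with `g`.

The kernels of the two projections restricted to `G` commute elementwise and are normal in `G`.
If `f` kills neither, take `f x ≠ 1` and `f y ≠ 1` from them. Every conjugate of `f x` in the image
commutes with `f y`, hence with `f x`. So the whole image commutes with `f x`, and by transitivity
the image is abelian.
-/

open Subgroup

namespace FreeGroup

variable {β : Type*}

theorem eq_one_of_forall_commute [DecidableEq β] {a b : β} (hab : a ≠ b) {z : FreeGroup β}
    (hz : ∀ g, Commute g z) : z = 1 := by
  by_contra hz₁
  have hne : z.toWord ≠ [] := toWord_eq_nil_iff.not.mpr hz₁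
  obtain ⟨⟨c, ε⟩, w, hw⟩ := List.exists_cons_of_ne_nil hne
  obtain ⟨L, ⟨e, δ⟩, hL⟩ := (List.eq_nil_or_concat z.toWord).resolve_left hne
  obtain ⟨s, hs⟩ : ∃ s, s ≠ c := by
    by_cases hac : a = c
    · exact ⟨b, fun hbc => hab (hac.trans hbc.symm)⟩
    · exact ⟨a, hac⟩
  -- `(s, δ)` cancels neither against the first letter `(c, ε)` of `z` nor against its last
  -- letter `(e, δ)`, so multiplying by it on either side just extends the reduced word.
  have hleft : (mk [(s, δ)] * z).toWord = (s, δ) :: z.toWord := by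
    rw [toWord_mul, toWord_mk, reduce_singleton]
    apply IsReduced.reduce_eq
    rw [List.singleton_append, hw, isReduced_cons_cons]
    exact ⟨fun h => absurd h hs, hw ▸ isReduced_toWord⟩
  have hright : (z * mk [(s, δ)]).toWord = z.toWord ++ [(s, δ)] := by
    rw [toWord_mul, toWord_mk, reduce_singleton]
    apply IsReduced.reduce_eq
    refine List.isChain_append.mpr ⟨isReduced_toWord, List.isChain_singleton _, ?_⟩
    simp [hL]
  rw [(hz _).eq, hright, hw] at hleft
  exact hs (Prod.ext_iff.mp (List.cons.inj hleft).1).1.symm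

theorem isCyclic_of_subsingleton [Subsingleton β] : IsCyclic (FreeGroup β) := by
  obtain ⟨g, hg⟩ : ∃ g : FreeGroup β, Set.range of ⊆ {g} := by
    rcases isEmpty_or_nonempty β with _ | ⟨⟨b⟩⟩
    · exact ⟨1, by simp⟩
    · exact ⟨of b, by rintro _ ⟨a, rfl⟩; rw [Subsingleton.elim a b]; rfl⟩
  refine isCyclic_iff_exists_zpowers_eq_top.mpr ⟨g, top_unique ?_⟩
  rw [← closure_range_of, Subgroup.zpowers_eq_closure]
  exact Subgroup.closure_mono hg

end FreeGroup

namespace IsFreeGroup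

variable {G : Type*} [Group G] [IsFreeGroup G]

theorem isCyclic_of_center_ne_bot (h : center G ≠ ⊥) : IsCyclic G := by
  classical
  let e := toFreeGroup G
  rcases subsingleton_or_nontrivial (Generators G) with _ | _
  · exact e.isCyclic.mpr FreeGroup.isCyclic_of_subsingleton
  · obtain ⟨a, b, hab⟩ := exists_pair_ne (Generators G)
    refine absurd ((eq_bot_iff_forall _).mpr fun z hz => ?_) h
    refine e.map_eq_one_iff.mp (FreeGroup.eq_one_of_forall_commute hab fun g => ?_)
    simpa using (show Commute (e.symm g) z from mem_center_iff.mp hz (e.symm g)).map e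

theorem isCyclic_centralizer {x : G} (hx : x ≠ 1) :
    IsCyclic (centralizer {x}) := by
  refine isCyclic_of_center_ne_bot fun h => hx ?_
  have hmem : (⟨x, mem_centralizer_singleton_iff.mpr rfl⟩ : centralizer {x}) ∈ center _ :=
    mem_center_iff.mpr fun g => Subtype.ext (mem_centralizer_singleton_iff.mp g.2)
  rw [h] at hmem
  exact congrArg Subtype.val (mem_bot.mp hmem)

end IsFreeGroup

section CyclicCentralizers

variable {G : Type*} [Group G]

theorem Commute.trans_of_ne_one (hcyc : ∀ x : G, x ≠ 1 → IsCyclic (centralizer {x}))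
    {x y z : G} (hx : x ≠ 1) (h₁ : Commute y x) (h₂ : Commute x z) : Commute y z := by
  have : IsCyclic (centralizer {x}) := hcyc x hx
  exact congrArg Subtype.val (mul_comm'
    (⟨y, mem_centralizer_singleton_iff.mpr h₁.eq⟩ : centralizer {x})
    ⟨z, mem_centralizer_singleton_iff.mpr h₂.eq.symm⟩)

theorem commute_conj_of_commute_conj (hcyc : ∀ x : G, x ≠ 1 → IsCyclic (centralizer {x}))
    {a b u : G} (ha : a ≠ 1) (h : Commute a (u * a * u⁻¹)) (hb : Commute a b) :
    Commute a (u * b * u⁻¹) := by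
  have hc : u * a * u⁻¹ ≠ 1 := by simpa using ha
  exact h.trans_of_ne_one hcyc hc (by simpa using hb.map (MulAut.conj u))

theorem commute_sq_of_conj_eq_zpow [IsMulTorsionFree G] {g u : G} {m n : ℤ} (hg : g ≠ 1)
    (hn : u * g * u⁻¹ = g ^ n) (hm : u⁻¹ * g * u = g ^ m) : Commute (u ^ 2) g := by
  have hmn : m * n = 1 := by
    have : g ^ (m * n) = g := by
      have hconj := conj_zpow (a := u⁻¹) (b := g) (i := n)
      rw [inv_inv] at hconj
      rw [zpow_mul, ← hm, hconj, ← hn]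
      group
    have : g ^ (m * n - 1) = 1 := by rw [zpow_sub_one, this, mul_inv_cancel]
    linarith [(IsMulTorsionFree.zpow_eq_one_iff_right hg).mp this]
  have hnn : n * n = 1 := by
    rcases Int.eq_one_or_neg_one_of_mul_eq_one' hmn with ⟨-, rfl⟩ | ⟨-, rfl⟩ <;> rfl
  refine mul_inv_eq_iff_eq_mul.mp ?_
  calc u ^ 2 * g * (u ^ 2)⁻¹ = u * (u * g * u⁻¹) * u⁻¹ := by rw [sq]; group
    _ = (u * g * u⁻¹) ^ n := by rw [hn, ← conj_zpow, hn]
    _ = g := by rw [hn, ← zpow_mul, hnn, zpow_one]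

theorem commute_of_commute_conj [IsMulTorsionFree G]
    (hcyc : ∀ x : G, x ≠ 1 → IsCyclic (centralizer {x}))
    {a u : G} (ha : a ≠ 1) (h : Commute a (u * a * u⁻¹)) : Commute u a := by
  have : IsCyclic (centralizer {a}) := hcyc a ha
  obtain ⟨⟨g, hag⟩, hgen⟩ := IsCyclic.exists_generator (α := centralizer {a})
  have hga : Commute g a := mem_centralizer_singleton_iff.mp hag
  have mem_zpowers : ∀ x, Commute a x → ∃ k : ℤ, x = g ^ k := fun x hx => by
    obtain ⟨k, hk⟩ := hgen ⟨x, mem_centralizer_singleton_iff.mpr hx.eq.symm⟩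
    exact ⟨k, (congrArg Subtype.val hk).symm⟩
  have hg : g ≠ 1 := by
    rintro rfl
    obtain ⟨k, rfl⟩ := mem_zpowers a (Commute.refl a)
    simp at ha
  have h' : Commute a (u⁻¹ * a * u⁻¹⁻¹) := by
    simpa [mul_assoc] using (h.map (MulAut.conj u⁻¹)).symm
  obtain ⟨n, hn⟩ := mem_zpowers _ (commute_conj_of_commute_conj hcyc ha h hga.symm)
  obtain ⟨m, hm⟩ := mem_zpowers _ (commute_conj_of_commute_conj hcyc ha h' hga.symm)
  rw [inv_inv] at hm
  have hu2 := commute_sq_of_conj_eq_zpow hg hn hm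
  rcases eq_or_ne u 1 with rfl | hu
  · exact Commute.one_left a
  have hu2' : u ^ 2 ≠ 1 := by simpa using hu
  exact ((Commute.self_pow u 2).trans_of_ne_one hcyc hu2' hu2).trans_of_ne_one hcyc hg hga

end CyclicCentralizers

theorem MonoidHom.range_commute_of_commuting_subgroups {G H : Type*} [Group G] [Group H]
    [IsMulTorsionFree H] (hcyc : ∀ x : H, x ≠ 1 → IsCyclic (centralizer {x})) (f : G →* H)
    {K₁ K₂ : Subgroup G} [K₁.Normal] (hK : ∀ x ∈ K₁, ∀ y ∈ K₂, Commute x y)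
    (h₁ : ¬ K₁ ≤ f.ker) (h₂ : ¬ K₂ ≤ f.ker) : ∀ x ∈ f.range, ∀ y ∈ f.range, Commute x y := by
  obtain ⟨x, hx, hfx⟩ := SetLike.not_le_iff_exists.mp h₁
  obtain ⟨y, hy, hfy⟩ := SetLike.not_le_iff_exists.mp h₂
  rw [MonoidHom.mem_ker] at hfx hfy
  have hcentral : ∀ g, Commute (f g) (f x) := fun g => by
    refine commute_of_commute_conj hcyc hfx ?_
    have hconj : Commute (f (g * x * g⁻¹)) (f y) :=
      (hK _ (Normal.conj_mem ‹_› x hx g) y hy).map f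
    simpa using ((hK x hx y hy).map f).trans_of_ne_one hcyc hfy hconj.symm
  rintro _ ⟨g, rfl⟩ _ ⟨g', rfl⟩
  exact (hcentral g).trans_of_ne_one hcyc hfx (hcentral g').symm

/-- If `G ≤ A₁ × A₂` and `f : G → F` is a homomorphism to a free group with
nonabelian image, then `f` factors through one of the coordinate projections:
`G ∩ ker p₁ ≤ ker f` or `G ∩ ker p₂ ≤ ker f`. -/
theorem stmt_8 {A₁ A₂ : Type*} [Group A₁] [Group A₂] (G : Subgroup (A₁ × A₂))
    {α : Type*} (f : G →* FreeGroup α)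
    (hna : ¬ ∀ x ∈ f.range, ∀ y ∈ f.range, x * y = y * x) :
    ((MonoidHom.fst A₁ A₂).comp G.subtype).ker ≤ f.ker ∨
      ((MonoidHom.snd A₁ A₂).comp G.subtype).ker ≤ f.ker := by
  by_contra! h
  refine hna (f.range_commute_of_commuting_subgroups
    (fun _ => IsFreeGroup.isCyclic_centralizer) (fun x hx y hy => ?_) h.1 h.2)
  have hx₁ : (x : A₁ × A₂).1 = 1 := MonoidHom.mem_ker.mp hx
  have hy₂ : (y : A₁ × A₂).2 = 1 := MonoidHom.mem_ker.mp hy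
  exact Subtype.ext (Prod.commute_iff.mpr
    ⟨hx₁ ▸ Commute.one_left _, hy₂ ▸ Commute.one_right _⟩).eq
end

section
/- Let G ≤ L₁ × ⋯ × Lₙ where each Lᵢ has the property that it is abelian or has trivial center (e.g., each Lᵢ a limit group). Let pᵢ denote projection to Lᵢ and I = {i : pᵢ(G) abelian}. Then the center Z(G) equals the kernel of the natural map from G to ∏_{i∉I} Lᵢ, i.e., Z(G) = G ∩ ∏_{i∈I} Lᵢ. -/
/-! An element of `G` is central iff each of its coordinates commutes with the corresponding
projection `pᵢ(G)`. When `pᵢ(G)` is abelian this is automatic; when it is centerless it forces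
the coordinate to be trivial. -/

theorem forall_mul_comm_iff_of_comm_or_centerless {M : Type*} [Monoid M] {S : Set M}
    (hS : (∀ x ∈ S, ∀ y ∈ S, x * y = y * x) ∨ (∀ x ∈ S, (∀ y ∈ S, x * y = y * x) → x = 1))
    {x : M} (hx : x ∈ S) :
    (∀ y ∈ S, x * y = y * x) ↔ ((¬ ∀ x ∈ S, ∀ y ∈ S, x * y = y * x) → x = 1) := by
  constructor
  · intro hxS hnab
    exact hS.resolve_left hnab x hx hxS
  · intro hx1 y hy
    by_cases hab : ∀ x ∈ S, ∀ y ∈ S, x * y = y * x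
    · exact hab x hx y hy
    · rw [hx1 hab, one_mul, mul_one]

theorem Subgroup.mem_center_iff_forall_eval {ι : Type*} {L : ι → Type*} [∀ i, Group (L i)]
    {G : Subgroup (∀ i, L i)} {g : G} :
    g ∈ Subgroup.center G ↔
      ∀ i, ∀ y ∈ G.map (Pi.evalMonoidHom L i), (g : ∀ i, L i) i * y = y * (g : ∀ i, L i) i := by
  rw [Subgroup.mem_center_iff]
  constructor
  · rintro hg i _ ⟨h, hh, rfl⟩
    exact (congrFun (congrArg Subtype.val (hg ⟨h, hh⟩)) i).symm
  · intro hg h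
    ext i
    exact (hg i _ ⟨h, h.2, rfl⟩).symm

/-- Let `G ≤ L₁ × ⋯ × Lₙ`, where each projection `pᵢ(G)` is abelian or
centerless. Then an element of `G` is central iff its coordinates at all the
indices with nonabelian projection are trivial, i.e. `Z(G) = G ∩ ∏_{i∈I} Lᵢ`
where `I` is the set of indices with abelian projection. -/
theorem stmt_11 {n : ℕ} (L : Fin n → Type*) [∀ i, Group (L i)]
    (G : Subgroup (∀ i, L i))
    (hcc : ∀ i, (∀ x ∈ Subgroup.map (Pi.evalMonoidHom L i) G,
                  ∀ y ∈ Subgroup.map (Pi.evalMonoidHom L i) G, x * y = y * x)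
            ∨ (∀ x ∈ Subgroup.map (Pi.evalMonoidHom L i) G,
                (∀ y ∈ Subgroup.map (Pi.evalMonoidHom L i) G, x * y = y * x) → x = 1)) :
    ∀ g : G, g ∈ Subgroup.center G ↔
      ∀ i, (¬ ∀ x ∈ Subgroup.map (Pi.evalMonoidHom L i) G,
              ∀ y ∈ Subgroup.map (Pi.evalMonoidHom L i) G, x * y = y * x) →
        (g : ∀ i, L i) i = 1 := by
  intro g
  rw [Subgroup.mem_center_iff_forall_eval]
  exact forall_congr' fun i =>
    forall_mul_comm_iff_of_comm_or_centerless (hcc i) ⟨(g : ∀ i, L i), g.2, rfl⟩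
end

section
/- Let φ : G → F be a homomorphism to a free group with nonabelian image, and let R₁, R₂ be subsets of G. Suppose φ kills every commutator [r₂^s, r₁] for r₁ ∈ R₁, r₂ ∈ R₂, and s ranging over a generating set of G together with 1. Then φ kills all of R₁ or φ kills all of R₂. -/
/-!
A free group with a nontrivial central element is cyclic: a central element `c` and a generator
`t` generate an abelian, hence (Nielsen–Schreier) cyclic, subgroup, and the exponent sum of `t`
puts `c` into `⟨t⟩`; two distinct generators would then force `c = 1`. Applied (via
Nielsen–Schreier again) to centralizers, this makes the centralizer of any `x ≠ 1` in a free
group cyclic. Hence commuting is transitive on nontrivial elements, and, by torsion-freeness,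
`g x g⁻¹` commutes with `x ≠ 1` only if `g` commutes with `x`.

For the theorem, let `a = φ r₁ ≠ 1` and `b = φ r₂ ≠ 1`. Both `b` and every `(φ s) b (φ s)⁻¹`
commute with `a`, hence with each other, so every `φ s` commutes with `b`. Thus `φ(G)` lies in the
centralizer of `b`, which is abelian.
-/

open Subgroup

namespace FreeGroup

variable {β : Type*}

theorem not_commute_of_ne {a b : β} (h : a ≠ b) : ¬ Commute (of a) (of b) := by
  classical
  intro hab
  have := hab.map (FreeGroup.lift fun x ↦
    if x = a then Equiv.swap (0 : Fin 3) 1 else Equiv.swap 1 2)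
  simp only [lift_apply_of, if_pos, if_neg h.symm, Commute, SemiconjBy] at this
  exact absurd this (by decide)

instance isCyclic_of_subsingleton_s14 [Subsingleton β] : IsCyclic (FreeGroup β) := by
  cases isEmpty_or_nonempty β
  · infer_instance
  · have : Unique β := uniqueOfSubsingleton (Classical.arbitrary β)
    infer_instance

def exponentSum [DecidableEq β] (t : β) : FreeGroup β →* Multiplicative ℤ :=
  FreeGroup.lift (Pi.mulSingle t (.ofAdd 1))

@[simp]
theorem exponentSum_of_self [DecidableEq β] (t : β) : exponentSum t (of t) = .ofAdd 1 := by
  simp [exponentSum]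

@[simp]
theorem exponentSum_of_of_ne [DecidableEq β] {s t : β} (h : s ≠ t) :
    exponentSum t (of s) = 1 := by
  simp [exponentSum, h]

end FreeGroup

namespace IsFreeGroup

variable {H : Type*} [Group H] [IsFreeGroup H]

theorem isCyclic_of_subsingleton_generators [Subsingleton (Generators H)] : IsCyclic H :=
  (toFreeGroup H).isCyclic.mpr inferInstance

theorem isCyclic_of_isMulCommutative [IsMulCommutative H] : IsCyclic H := by
  have : Subsingleton (Generators H) := ⟨fun a b ↦ by
    by_contra hab
    refine FreeGroup.not_commute_of_ne hab ?_
    have hcomm : Commute (mulEquiv H (.of a)) (mulEquiv H (.of b)) :=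
      isMulCommutative_iff.mp ‹_› _ _
    simpa using hcomm.map (mulEquiv H).symm⟩
  exact isCyclic_of_subsingleton_generators

end IsFreeGroup

namespace FreeGroup

variable {β : Type*}

theorem mem_zpowers_of_commute_of {c : FreeGroup β} {t : β} (h : Commute c (of t)) :
    c ∈ zpowers (of t) := by
  classical
  let K := closure {c, of t}
  have : IsMulCommutative K := isMulCommutative_closure (by simpa using ⟨h.eq, h.eq.symm⟩)
  obtain ⟨u, hu⟩ :=
    K.isCyclic_iff_exists_zpowers_eq_top.mp IsFreeGroup.isCyclic_of_isMulCommutative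
  have hc : c ∈ zpowers u := hu ▸ subset_closure (by simp)
  obtain ⟨j, hj⟩ : of t ∈ zpowers u := hu ▸ subset_closure (by simp)
  -- the exponent sum of `t` shows that `of t` is a primitive power of `u`
  have hj1 : j * (exponentSum t u).toAdd = 1 := by
    simpa [← hj, mul_comm] using congrArg Multiplicative.toAdd (exponentSum_of_self t)
  have hu_mem : u ∈ zpowers (of t) := by
    rcases Int.eq_one_or_neg_one_of_mul_eq_one hj1 with rfl | rfl
    · simp [← hj]
    · simp [← hj]
  exact zpowers_le.mpr hu_mem hc

theorem subsingleton_of_forall_commute {c : FreeGroup β} (hc : c ≠ 1) (h : ∀ y, Commute c y) :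
    Subsingleton β := by
  classical
  refine ⟨fun a b ↦ by_contra fun hab ↦ hc ?_⟩
  obtain ⟨m, rfl⟩ := mem_zpowers_iff.mp (mem_zpowers_of_commute_of (h (of a)))
  obtain ⟨n, hn⟩ := mem_zpowers_iff.mp (mem_zpowers_of_commute_of (h (of b)))
  have hm : m = 0 := by
    simpa [Ne.symm hab] using (congrArg (Multiplicative.toAdd ∘ exponentSum a) hn).symm
  simp [hm]

end FreeGroup

theorem IsFreeGroup.isCyclic_of_forall_commute {H : Type*} [Group H] [IsFreeGroup H] {x : H}
    (hx : x ≠ 1) (h : ∀ y, Commute x y) : IsCyclic H := by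
  have : Subsingleton (IsFreeGroup.Generators H) :=
    FreeGroup.subsingleton_of_forall_commute (c := toFreeGroup H x) (by simpa using hx)
      fun y ↦ by simpa using (h ((toFreeGroup H).symm y)).map (toFreeGroup H)
  exact isCyclic_of_subsingleton_generators

theorem conj_eq_or_eq_inv_of_mem_zpowers {G : Type*} [Group G] [IsMulTorsionFree G] {g z : G}
    (hz : z ≠ 1) (h₁ : g * z * g⁻¹ ∈ zpowers z) (h₂ : g⁻¹ * z * g ∈ zpowers z) :
    g * z * g⁻¹ = z ∨ g * z * g⁻¹ = z⁻¹ := by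
  obtain ⟨j, hj⟩ := mem_zpowers_iff.mp h₁
  obtain ⟨i, hi⟩ := mem_zpowers_iff.mp h₂
  have hz_pow : z ^ (i * j) = z := by
    calc z ^ (i * j) = (g⁻¹ * z * g⁻¹⁻¹) ^ j := by rw [zpow_mul, hi, inv_inv]
      _ = g⁻¹ * (g * z * g⁻¹) * g := by rw [conj_zpow, ← hj]; group
      _ = z := by group
  have hij : i * j = 1 := by
    have : z ^ (i * j - 1) = 1 := by rw [zpow_sub_one, hz_pow, mul_inv_cancel]
    linarith [(IsMulTorsionFree.zpow_eq_one_iff_right hz).mp this]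
  rcases Int.eq_one_or_neg_one_of_mul_eq_one (mul_comm i j ▸ hij) with rfl | rfl
  · exact .inl (by rw [← hj, zpow_one])
  · exact .inr (by rw [← hj, zpow_neg_one])

namespace FreeGroup

variable {β : Type*}

theorem exists_zpowers_eq_centralizer {x : FreeGroup β} (hx : x ≠ 1) :
    ∃ z, zpowers z = centralizer {x} := by
  refine (centralizer {x}).isCyclic_iff_exists_zpowers_eq_top.mp ?_
  exact IsFreeGroup.isCyclic_of_forall_commute
    (x := ⟨x, mem_centralizer_singleton_iff.mpr rfl⟩) (by simpa using hx)
    fun y ↦ Subtype.ext (mem_centralizer_singleton_iff.mp y.2).symm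

theorem commute_trans {x y z : FreeGroup β} (hx : x ≠ 1) (hy : Commute x y) (hz : Commute x z) :
    Commute y z := by
  obtain ⟨w, hw⟩ := exists_zpowers_eq_centralizer hx
  obtain ⟨m, rfl⟩ : y ∈ zpowers w := hw ▸ mem_centralizer_singleton_iff.mpr hy.eq.symm
  obtain ⟨n, rfl⟩ : z ∈ zpowers w := hw ▸ mem_centralizer_singleton_iff.mpr hz.eq.symm
  exact .zpow_zpow_self w m n

theorem eq_one_of_conj_eq_inv {g z : FreeGroup β} (h : g * z * g⁻¹ = z⁻¹) : z = 1 := by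
  have hg2 : Commute (g * g) z := by
    have : g * g * z * (g * g)⁻¹ = z := by
      rw [show g * g * z * (g * g)⁻¹ = g * (g * z * g⁻¹) * g⁻¹ by group, h,
        show g * z⁻¹ * g⁻¹ = (g * z * g⁻¹)⁻¹ by group, h, inv_inv]
    exact mul_inv_eq_iff_eq_mul.mp this
  have hgz : Commute g z := by
    by_cases hg : g * g = 1
    · rw [(sq_eq_one (a := g)).mp (by rwa [sq])]
      exact .one_left z
    · exact commute_trans hg (.mul_left (.refl g) (.refl g)) hg2
  rw [← self_eq_inv, ← h, hgz.eq, mul_inv_cancel_right]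

theorem commute_of_commute_conj {x g : FreeGroup β} (hx : x ≠ 1)
    (h : Commute x (g * x * g⁻¹)) : Commute g x := by
  obtain ⟨z, hz⟩ := exists_zpowers_eq_centralizer hx
  have mem_iff : ∀ y, y ∈ zpowers z ↔ Commute x y := fun y ↦ by
    rw [hz, mem_centralizer_singleton_iff]
    exact eq_comm
  have hxz : Commute x z := (mem_iff z).mp (mem_zpowers z)
  have hz1 : z ≠ 1 := by
    rintro rfl
    simpa [hx] using (mem_iff x).mpr (.refl x)
  have hx' : g * x * g⁻¹ ≠ 1 := by rwa [Ne, conj_eq_one_iff]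
  have h₁ : g * z * g⁻¹ ∈ zpowers z :=
    (mem_iff _).mpr (commute_trans hx' h.symm (hxz.conj g))
  have h₂ : g⁻¹ * z * g ∈ zpowers z := by
    refine (mem_iff _).mpr ?_
    simpa [mul_assoc] using (commute_trans hx h hxz).conj g⁻¹
  rcases conj_eq_or_eq_inv_of_mem_zpowers hz1 h₁ h₂ with hg | hg
  · obtain ⟨n, rfl⟩ := mem_zpowers_iff.mp ((mem_iff x).mpr (.refl x))
    exact (show Commute g z from mul_inv_eq_iff_eq_mul.mp hg).zpow_right n
  · exact absurd (eq_one_of_conj_eq_inv hg) hz1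

end FreeGroup

open scoped commutatorElement

theorem stmt_14_general {G : Type*} [Group G] {α : Type*} (S : Set G)
    (hSgen : Subgroup.closure S = ⊤)
    (R₁ R₂ : Set G) (φ : G →* FreeGroup α)
    (hna : ¬ ∀ x ∈ φ.range, ∀ y ∈ φ.range, x * y = y * x)
    (hkill : ∀ r₁ ∈ R₁, ∀ r₂ ∈ R₂, ∀ s ∈ insert (1 : G) S,
      φ ⁅s * r₂ * s⁻¹, r₁⁆ = 1) :
    (∀ r ∈ R₁, φ r = 1) ∨ (∀ r ∈ R₂, φ r = 1) := by
  by_contra! ⟨⟨r₁, hr₁, ha⟩, ⟨r₂, hr₂, hb⟩⟩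
  have hconj : ∀ s ∈ insert 1 S, Commute (φ s * φ r₂ * (φ s)⁻¹) (φ r₁) := fun s hs ↦ by
    simpa [commutatorElement_eq_one_iff_commute] using hkill r₁ hr₁ r₂ hr₂ s hs
  have hba : Commute (φ r₂) (φ r₁) := by simpa using hconj 1 (Set.mem_insert 1 S)
  have hgen : ∀ s ∈ S, φ s ∈ centralizer {φ r₂} := fun s hs ↦
    mem_centralizer_singleton_iff.mpr (FreeGroup.commute_of_commute_conj hb
      (FreeGroup.commute_trans ha hba.symm (hconj s (Set.mem_insert_of_mem 1 hs)).symm)).eq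
  have hrange : φ.range ≤ centralizer {φ r₂} := by
    rw [MonoidHom.range_eq_map, ← hSgen, MonoidHom.map_closure, closure_le]
    rintro _ ⟨s, hs, rfl⟩
    exact hgen s hs
  exact hna fun x hx y hy ↦ FreeGroup.commute_trans hb
    (mem_centralizer_singleton_iff.mp (hrange hx)).symm
    (mem_centralizer_singleton_iff.mp (hrange hy)).symm

/-- Let `φ : G → F` be a homomorphism to a free group with nonabelian image,
where `G` is generated by a finite set `S`. If `φ` kills every commutator
`[r₂^s, r₁]` with `r₁ ∈ R₁`, `r₂ ∈ R₂`, `s ∈ S ∪ {1}`, then `φ` kills all of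
`R₁` or all of `R₂`. -/
theorem stmt_14 {G : Type*} [Group G] {α : Type*} (S : Set G)
    (hSfin : S.Finite) (hSgen : Subgroup.closure S = ⊤)
    (R₁ R₂ : Set G) (φ : G →* FreeGroup α)
    (hna : ¬ ∀ x ∈ φ.range, ∀ y ∈ φ.range, x * y = y * x)
    (hkill : ∀ r₁ ∈ R₁, ∀ r₂ ∈ R₂, ∀ s ∈ insert (1 : G) S,
      φ ⁅s * r₂ * s⁻¹, r₁⁆ = 1) :
    (∀ r ∈ R₁, φ r = 1) ∨ (∀ r ∈ R₂, φ r = 1) :=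
  stmt_14_general S hSgen R₁ R₂ φ hna hkill
end

section
/- Let G be a residually free group generated by (the image of) a finite set S, and let G̃ = F(S)/N be a quotient of F(S) such that: (i) every homomorphism F(S) → F with nonabelian image factoring through G also factors through G̃ and vice versa, and (ii) N is generated by commutators. Then G is a quotient of G̃, i.e., N ≤ ker(F(S) → G). -/
/-- Let `G` be a residually free group generated by a finite set `S`, given by
a surjection `π : F(S) → G`, and let `G̃ = F(S)/N` be such that: (i) a
homomorphism `F(S) → F` with nonabelian image factors through `G` iff it
factors through `G̃`; (ii) every element of `N` is killed by any homomorphism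
`F(S) → F` with abelian image. Then `G` is a quotient of `G̃`: `N ≤ ker π`. -/
theorem stmt_16 {S : Type*} [Finite S] {G : Type*} [Group G]
    (π : FreeGroup S →* G) (hπ : Function.Surjective π)
    (hres : ∀ g : G, g ≠ 1 → ∃ f : G →* FreeGroup (Fin 2), f g ≠ 1)
    (N : Subgroup (FreeGroup S)) [N.Normal]
    (hi : ∀ φ : FreeGroup S →* FreeGroup (Fin 2),
      (¬ ∀ x ∈ φ.range, ∀ y ∈ φ.range, x * y = y * x) →
      (π.ker ≤ φ.ker ↔ N ≤ φ.ker))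
    (hii : ∀ φ : FreeGroup S →* FreeGroup (Fin 2),
      (∀ x ∈ φ.range, ∀ y ∈ φ.range, x * y = y * x) → N ≤ φ.ker) :
    N ≤ π.ker := by
  intro x hx
  rw [MonoidHom.mem_ker]
  by_contra hne
  obtain ⟨f, hf⟩ := hres (π x) hne
  set φ := f.comp π with hφ
  have hker : π.ker ≤ φ.ker := by
    intro y hy
    simp only [MonoidHom.mem_ker] at hy ⊢
    simp [hφ, hy]
  have hxφ : φ x ≠ 1 := hf
  by_cases hab : ∀ a ∈ φ.range, ∀ b ∈ φ.range, a * b = b * a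
  · exact hxφ (hii φ hab hx)
  · exact hxφ ((hi φ hab).mp hker hx)
end

section
/- If G is a finitely generated group, then RF_na(G) ≅ RF(G)/Z(RF(G)); in particular, RF_na(G) has trivial center. -/
/-!
A nontrivial element `x` of a free group has abelian centralizer: the centralizer is free by
Nielsen–Schreier and has `x` in its center, while a letter commuting with a reduced word is the
only letter occurring in it, so a free group with nontrivial center has rank at most one.
Consequently, if `f : G → F` has nonabelian image and `f g` commutes with all of `f G`, then
`f g = 1`. Thus `g ∈ Kna` iff `f g` is central in `f G` for every `f` (this being automatic when
the image is abelian), iff `g` is central modulo `K`; and `g` is central modulo `Kna` iff it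
lies in `Kna`.
-/

open Subgroup

theorem List.forall_eq_of_cons_eq_append_singleton {α : Type*} {x : α} {L : List α}
    (h : x :: L = L ++ [x]) : ∀ y ∈ x :: L, y = x := by
  have : Nonempty α := ⟨x⟩
  have hrot : (x :: L).rotate 1 = x :: L := by simpa using h.symm
  obtain ⟨c, hc⟩ := List.rotate_one_eq_self_iff_eq_replicate.mp hrot
  have hmem : ∀ y ∈ x :: L, y = c := by
    rw [hc]
    exact fun y => List.eq_of_mem_replicate
  exact fun y hy => (hmem y hy).trans (hmem x List.mem_cons_self).symm

namespace FreeGroup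

variable {α : Type*}

section Reduced

variable [DecidableEq α] {L : List (α × Bool)}

theorem IsReduced.reduce_cons (h : IsReduced L) (x : α × Bool) :
    reduce (x :: L) = x :: L ∨ (x.1, !x.2) :: reduce (x :: L) = L := by
  rw [reduce.cons, h.reduce_eq]
  rcases L with _ | ⟨⟨b, t⟩, M⟩
  · simp
  · obtain ⟨a, s⟩ := x
    by_cases hab : a = b ∧ s = !t
    · obtain ⟨rfl, rfl⟩ := hab
      simp
    · simp [hab]

theorem IsReduced.reduce_append_singleton (h : IsReduced L) (x : α × Bool) :
    reduce (L ++ [x]) = L ++ [x] ∨ reduce (L ++ [x]) ++ [(x.1, !x.2)] = L := by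
  have hinv : L ++ [x] = invRev ((x.1, !x.2) :: invRev L) := by
    rw [invRev_cons, invRev_invRev]; simp [invRev]
  have hL : IsReduced (invRev L) := by
    rw [isReduced_iff_reduce_eq, reduce_invRev, h.reduce_eq]
  rw [hinv, reduce_invRev]
  rcases hL.reduce_cons (x.1, !x.2) with h' | h'
  · left; rw [h']
  · right
    have := congrArg invRev h'
    rw [invRev_cons, invRev_invRev] at this
    simpa [invRev] using this

theorem fst_eq_of_mem_toWord_of_commute {a : α} {w : FreeGroup α} (h : Commute (of a) w) :
    ∀ p ∈ w.toWord, p.1 = a := by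
  have hw : reduce ((a, true) :: w.toWord) = reduce (w.toWord ++ [(a, true)]) := by
    simpa [toWord_mul, toWord_of] using congrArg toWord h.eq
  -- On each side the new letter either cancels or is appended; length forbids mixed cases, and
  -- otherwise a word is a rotation of itself.
  have hred : IsReduced w.toWord := isReduced_toWord
  rcases hred.reduce_cons (a, true) with hl | hl <;>
  rcases hred.reduce_append_singleton (a, true) with hr | hr <;>
  rw [hw] at hl
  · intro p hp
    have hp' := List.mem_cons_of_mem (a, true) hp
    rw [List.forall_eq_of_cons_eq_append_singleton (hl.symm.trans hr) p hp']
  · have h1 := congrArg List.length hl; have h2 := congrArg List.length hr; simp at h1 h2; omega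
  · have h1 := congrArg List.length hl; have h2 := congrArg List.length hr; simp at h1 h2; omega
  · intro p hp
    rw [← hl] at hp
    rw [List.forall_eq_of_cons_eq_append_singleton (hl.trans hr.symm) p hp]

end Reduced

theorem subsingleton_of_mem_center_s17 {z : FreeGroup α} (hz : z ∈ center (FreeGroup α))
    (hz1 : z ≠ 1) : Subsingleton α := by
  classical
  obtain ⟨p, hp⟩ := List.exists_mem_of_ne_nil _ (mt toWord_eq_nil_iff.mp hz1)
  have hp_fst (a : α) : p.1 = a :=
    fst_eq_of_mem_toWord_of_commute (mem_center_iff.mp hz (of a)) p hp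
  exact ⟨fun a b => (hp_fst a).symm.trans (hp_fst b)⟩

theorem commute_of_subsingleton [Subsingleton α] (x y : FreeGroup α) : Commute x y := by
  have of_commute (a : α) (y : FreeGroup α) : Commute (of a) y := by
    induction y using FreeGroup.induction_on with
    | C1 => exact .one_right _
    | of b => rw [Subsingleton.elim a b]
    | inv_of b h => exact h.inv_right
    | mul u v hu hv => exact hu.mul_right hv
  induction x using FreeGroup.induction_on with
  | C1 => exact .one_left _
  | of a => exact of_commute a y
  | inv_of a h => exact h.inv_left
  | mul u v hu hv => exact hu.mul_left hv

end FreeGroup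

namespace IsFreeGroup

variable {H : Type*} [Group H] [IsFreeGroup H]

theorem commute_of_mem_center {z : H} (hz : z ∈ center H) (hz1 : z ≠ 1) (x y : H) :
    Commute x y := by
  let e := toFreeGroup H
  have : Subsingleton (Generators H) :=
    FreeGroup.subsingleton_of_mem_center_s17 (centerCongr e ⟨z, hz⟩).2
      ((map_ne_one_iff e e.injective).mpr hz1)
  simpa using (FreeGroup.commute_of_subsingleton (e x) (e y)).map e.symm

theorem commute_trans {x y z : H} (hx : x ≠ 1) (hyx : Commute y x) (hxz : Commute x z) :
    Commute y z := by
  -- `C` is free by Nielsen–Schreier (`subgroupIsFreeOfIsFree`).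
  let C := centralizer ({x} : Set H)
  have mem_C {g : H} (hg : Commute x g) : g ∈ C := mem_centralizer_singleton_iff.mpr hg.eq.symm
  have hxC : (⟨x, mem_C (.refl x)⟩ : C) ∈ center C :=
    mem_center_iff.mpr fun g => Subtype.ext (mem_centralizer_singleton_iff.mp g.2)
  have hxC1 : (⟨x, mem_C (.refl x)⟩ : C) ≠ 1 := by simpa using hx
  exact (commute_of_mem_center hxC hxC1 ⟨y, mem_C hyx.symm⟩ ⟨z, mem_C hxz⟩).map C.subtype

end IsFreeGroup

theorem MonoidHom.map_eq_one_of_forall_commute {G H : Type*} [Group G] [Group H] [IsFreeGroup H]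
    {f : G →* H} (hf : ¬ ∀ x ∈ f.range, ∀ y ∈ f.range, x * y = y * x) {g : G}
    (hg : ∀ h, Commute (f g) (f h)) : f g = 1 := by
  by_contra hne
  apply hf
  rintro _ ⟨a, rfl⟩ _ ⟨b, rfl⟩
  exact (IsFreeGroup.commute_trans hne (hg a).symm (hg b)).eq

theorem QuotientGroup.mk_mem_center_iff_forall_commute {G ι : Type*} [Group G] {H : ι → Type*}
    [∀ i, Group (H i)] {N : Subgroup G} [N.Normal] (f : ∀ i, G →* H i)
    (hN : N = ⨅ i, (f i).ker) {g : G} :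
    (g : G ⧸ N) ∈ center (G ⧸ N) ↔ ∀ i h, Commute (f i g) (f i h) := by
  rw [mem_center_iff, QuotientGroup.mk_surjective.forall]
  simp only [← QuotientGroup.mk_mul, QuotientGroup.eq, hN, mem_iInf, MonoidHom.mem_ker]
  rw [forall_comm]
  refine forall_congr' fun i => forall_congr' fun h => ?_
  rw [map_mul, map_inv, inv_mul_eq_one, map_mul, map_mul, eq_comm, Commute, SemiconjBy]

theorem mem_iInf_ker_nonabelian_iff {G F : Type*} [Group G] [Group F] [IsFreeGroup F] {g : G} :
    g ∈ ⨅ f : {f : G →* F // ¬ ∀ x ∈ f.range, ∀ y ∈ f.range, x * y = y * x},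
        (f : G →* F).ker ↔
      ∀ f : {f : G →* F // ¬ ∀ x ∈ f.range, ∀ y ∈ f.range, x * y = y * x}, ∀ h,
        Commute ((f : G →* F) g) ((f : G →* F) h) := by
  rw [mem_iInf]
  refine forall_congr' fun f => ⟨fun hg h => ?_, MonoidHom.map_eq_one_of_forall_commute f.2⟩
  rw [MonoidHom.mem_ker.mp hg]
  exact .one_left _

theorem stmt_17_general {G : Type*} [Group G] (K Kna : Subgroup G)
    [K.Normal] [Kna.Normal]
    (hK : K = ⨅ f : G →* FreeGroup (Fin 2), f.ker)
    (hKna : Kna = ⨅ f : {f : G →* FreeGroup (Fin 2) //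
        ¬ ∀ x ∈ f.range, ∀ y ∈ f.range, x * y = y * x},
      (f : G →* FreeGroup (Fin 2)).ker) :
    Nonempty ((G ⧸ Kna) ≃* (G ⧸ K) ⧸ Subgroup.center (G ⧸ K)) ∧
      Subgroup.center (G ⧸ Kna) = ⊥ := by
  have mk_mem_center_K (g : G) : (g : G ⧸ K) ∈ center (G ⧸ K) ↔
      ∀ f : G →* FreeGroup (Fin 2), ∀ h, Commute (f g) (f h) :=
    QuotientGroup.mk_mem_center_iff_forall_commute _ hK
  have mk_mem_center_Kna (g : G) : (g : G ⧸ Kna) ∈ center (G ⧸ Kna) ↔ g ∈ Kna := by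
    rw [QuotientGroup.mk_mem_center_iff_forall_commute _ hKna, hKna, mem_iInf_ker_nonabelian_iff]
  have hKna_eq : Kna = (center (G ⧸ K)).comap (QuotientGroup.mk' K) := by
    ext g
    rw [mem_comap, QuotientGroup.mk'_apply, mk_mem_center_K, hKna, mem_iInf_ker_nonabelian_iff]
    refine ⟨fun hg f h => ?_, fun hg f => hg f⟩
    by_cases hf : ∀ x ∈ f.range, ∀ y ∈ f.range, x * y = y * x
    · exact hf _ ⟨g, rfl⟩ _ ⟨h, rfl⟩
    · exact hg ⟨f, hf⟩ h
  let φ := (QuotientGroup.mk' (center (G ⧸ K))).comp (QuotientGroup.mk' K)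
  have hφ : Function.Surjective φ :=
    (QuotientGroup.mk'_surjective _).comp (QuotientGroup.mk'_surjective K)
  have hker : Kna = φ.ker := by
    rw [hKna_eq, ← MonoidHom.comap_ker, QuotientGroup.ker_mk']
  refine ⟨⟨(QuotientGroup.quotientMulEquivOfEq hker).trans
    (QuotientGroup.quotientKerEquivOfSurjective φ hφ)⟩, eq_bot_iff.mpr ?_⟩
  rintro ⟨g⟩ hg
  exact (QuotientGroup.eq_one_iff g).mpr ((mk_mem_center_Kna g).mp hg)

/-- For a finitely generated group `G`, `RF_na(G) ≅ RF(G)/Z(RF(G))`; in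
particular `RF_na(G)` has trivial center. Here `RF(G) = G ⧸ K` with `K` the
intersection of the kernels of all homomorphisms to a rank-two free group,
and `RF_na(G) = G ⧸ Kna` with `Kna` the intersection of the kernels of those
homomorphisms with nonabelian image. -/
theorem stmt_17 {G : Type*} [Group G] [Group.FG G] (K Kna : Subgroup G)
    [K.Normal] [Kna.Normal]
    (hK : K = ⨅ f : G →* FreeGroup (Fin 2), f.ker)
    (hKna : Kna = ⨅ f : {f : G →* FreeGroup (Fin 2) //
        ¬ ∀ x ∈ f.range, ∀ y ∈ f.range, x * y = y * x},
      (f : G →* FreeGroup (Fin 2)).ker) :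
    Nonempty ((G ⧸ Kna) ≃* (G ⧸ K) ⧸ Subgroup.center (G ⧸ K)) ∧
      Subgroup.center (G ⧸ Kna) = ⊥ :=
  stmt_17_general K Kna hK hKna
end
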